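/- Let μ > 0 and f continuous on [0,∞) with convergent improper integrals ∫₀^∞ sin(μs) f(s) ds and ∫₀^∞ cos(μs) f(s) ds. Then the problem y'' + μ² y = f on [0,∞), with the condition lim_{t→∞} y(t) = 0, has exactly one twice differentiable solution. -/

import Mathlib

/-!
Existence is variation of constants with the tails of the two convergent integrals:
`y t = -μ⁻¹ ∫_t^∞ sin (μ (t - s)) f s ds` solves the equation and tends to `0` because both tails
do. For uniqueness, the difference `w` of two solutions has constant energy
`c = w'² + μ² w²`. If `c > 0`, then `(w w')' = c - 2 μ² w²` is eventually at least `c / 2`, so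
`w w' → ∞`; but `|w'| ≤ √c` and `w → 0` force `w w' → 0`. Hence `c = 0` and `w = 0`.
-/

open Real Filter MeasureTheory Set Topology

lemma tendsto_atTop_of_hasDerivAt_ge {g g' : ℝ → ℝ} {δ : ℝ} (hδ : 0 < δ)
    (hg : ∀ᶠ t in atTop, HasDerivAt g (g' t) t ∧ δ ≤ g' t) : Tendsto g atTop atTop := by
  obtain ⟨T, hT⟩ := hg.exists_forall_of_atTop
  have hlin : ∀ s ∈ Ici T, δ * (s - T) ≤ g s - g T := by
    refine fun s hs => (convex_Ici T).mul_sub_le_image_sub_of_le_deriv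
      (fun x hx => (hT x hx).1.continuousAt.continuousWithinAt)
      (fun x hx => (hT x (interior_subset hx)).1.differentiableAt.differentiableWithinAt)
      (fun x hx => ?_) T self_mem_Ici s hs hs
    rw [(hT x (interior_subset hx)).1.deriv]
    exact (hT x (interior_subset hx)).2
  refine tendsto_atTop_mono' _ (eventually_atTop.2 ⟨T, fun s hs => ?_⟩)
    (tendsto_atTop_add_const_right _ (g T - δ * T) (tendsto_id.const_mul_atTop hδ))
  simp only [id]
  linarith [hlin s hs]

section HarmonicOscillator

variable {μ a : ℝ} {w w' : ℝ → ℝ}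

lemma harmonic_energy_eq (hw : ∀ t ∈ Ici a, HasDerivAt w (w' t) t)
    (hw' : ∀ t ∈ Ici a, HasDerivAt w' (-(μ ^ 2) * w t) t) :
    ∀ t ∈ Ici a, w' t ^ 2 + μ ^ 2 * w t ^ 2 = w' a ^ 2 + μ ^ 2 * w a ^ 2 := by
  have hE : ∀ t ∈ Ici a, HasDerivAt (fun t => w' t ^ 2 + μ ^ 2 * w t ^ 2) 0 t := fun t ht =>
    (((hw' t ht).pow 2).add (((hw t ht).pow 2).const_mul (μ ^ 2))).congr_deriv (by ring)
  exact fun t ht => constant_of_has_deriv_right_zero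
    (fun x hx => (hE x hx.1).continuousAt.continuousWithinAt)
    (fun x hx => (hE x hx.1).hasDerivWithinAt) t ⟨ht, le_rfl⟩

lemma harmonic_energy_eq_zero (hw : ∀ t ∈ Ici a, HasDerivAt w (w' t) t)
    (hw' : ∀ t ∈ Ici a, HasDerivAt w' (-(μ ^ 2) * w t) t) (hlim : Tendsto w atTop (𝓝 0)) :
    w' a ^ 2 + μ ^ 2 * w a ^ 2 = 0 := by
  set c := w' a ^ 2 + μ ^ 2 * w a ^ 2
  have hE := harmonic_energy_eq hw hw'
  refine le_antisymm (not_lt.1 fun hc => ?_) (by positivity)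
  have hsmall : ∀ᶠ t in atTop, 2 * μ ^ 2 * w t ^ 2 ≤ c / 2 := by
    have : Tendsto (fun t => 2 * μ ^ 2 * w t ^ 2) atTop (𝓝 0) := by
      simpa using (hlim.pow 2).const_mul (2 * μ ^ 2)
    exact this.eventually (ge_mem_nhds (half_pos hc))
  have hto_top : Tendsto (fun t => w t * w' t) atTop atTop := by
    refine tendsto_atTop_of_hasDerivAt_ge (g' := fun t => w' t * w' t + w t * (-(μ ^ 2) * w t))
      (half_pos hc) ?_
    filter_upwards [hsmall, eventually_ge_atTop a] with t ht hat
    refine ⟨(hw t hat).mul (hw' t hat), ?_⟩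
    linarith [hE t hat]
  have hbdd : IsBoundedUnder (· ≤ ·) atTop (fun t => ‖w' t‖) := by
    refine isBoundedUnder_of_eventually_le (a := √c) ?_
    filter_upwards [eventually_ge_atTop a] with t ht
    exact Real.abs_le_sqrt (by nlinarith [hE t ht, sq_nonneg (w t), sq_nonneg μ])
  exact not_tendsto_nhds_of_tendsto_atTop hto_top 0 (hlim.zero_mul_isBoundedUnder_le hbdd)

theorem eqOn_zero_of_harmonic_of_tendsto_zero (hμ : μ ≠ 0)
    (hw : ∀ t ∈ Ici a, HasDerivAt w (w' t) t)
    (hw' : ∀ t ∈ Ici a, HasDerivAt w' (-(μ ^ 2) * w t) t) (hlim : Tendsto w atTop (𝓝 0)) :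
    EqOn w 0 (Ici a) := by
  intro t ht
  have hE := harmonic_energy_eq hw hw' t ht
  rw [harmonic_energy_eq_zero hw hw' hlim] at hE
  have : μ ^ 2 * w t ^ 2 = 0 := by nlinarith [sq_nonneg (w' t), sq_nonneg (w t), sq_nonneg μ]
  simpa [hμ] using this

end HarmonicOscillator

section VariationOfConstants

variable {μ : ℝ} {f S C : ℝ → ℝ}

/-- For `S = -∫_t^∞ sin (μ s) f s ds` and `C = -∫_t^∞ cos (μ s) f s ds` this is
`y t = -μ⁻¹ ∫_t^∞ sin (μ (t - s)) f s ds`. -/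
noncomputable def variationOfConstants (μ : ℝ) (S C : ℝ → ℝ) (t : ℝ) : ℝ :=
  μ⁻¹ * (sin (μ * t) * C t - cos (μ * t) * S t)

lemma hasDerivAt_sin_mul (μ t : ℝ) : HasDerivAt (fun t => sin (μ * t)) (μ * cos (μ * t)) t := by
  simpa [mul_comm] using ((hasDerivAt_id t).const_mul μ).sin

lemma hasDerivAt_cos_mul (μ t : ℝ) : HasDerivAt (fun t => cos (μ * t)) (-(μ * sin (μ * t))) t := by
  simpa [mul_comm] using ((hasDerivAt_id t).const_mul μ).cos

lemma hasDerivAt_variationOfConstants (hμ : μ ≠ 0) {t : ℝ}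
    (hS : HasDerivAt S (sin (μ * t) * f t) t) (hC : HasDerivAt C (cos (μ * t) * f t) t) :
    HasDerivAt (variationOfConstants μ S C) (cos (μ * t) * C t + sin (μ * t) * S t) t := by
  refine ((((hasDerivAt_sin_mul μ t).mul hC).sub ((hasDerivAt_cos_mul μ t).mul hS)).const_mul
    μ⁻¹).congr_deriv ?_
  field_simp
  ring

lemma hasDerivAt_deriv_variationOfConstants (hμ : μ ≠ 0)
    (hS : ∀ t, HasDerivAt S (sin (μ * t) * f t) t) (hC : ∀ t, HasDerivAt C (cos (μ * t) * f t) t)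
    (t : ℝ) :
    HasDerivAt (deriv (variationOfConstants μ S C))
      (f t - μ ^ 2 * variationOfConstants μ S C t) t := by
  have hderiv :
      deriv (variationOfConstants μ S C) = fun t => cos (μ * t) * C t + sin (μ * t) * S t :=
    funext fun t => (hasDerivAt_variationOfConstants hμ (hS t) (hC t)).deriv
  rw [hderiv]
  refine (((hasDerivAt_cos_mul μ t).mul (hC t)).add
    ((hasDerivAt_sin_mul μ t).mul (hS t))).congr_deriv ?_
  unfold variationOfConstants
  field_simp
  linear_combination f t * sin_sq_add_cos_sq (μ * t)

lemma tendsto_variationOfConstants (hS : Tendsto S atTop (𝓝 0)) (hC : Tendsto C atTop (𝓝 0)) :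
    Tendsto (variationOfConstants μ S C) atTop (𝓝 0) := by
  have hsin : IsBoundedUnder (· ≤ ·) atTop fun t => ‖sin (μ * t)‖ :=
    isBoundedUnder_of ⟨1, fun t => by simpa using abs_sin_le_one (μ * t)⟩
  have hcos : IsBoundedUnder (· ≤ ·) atTop fun t => ‖cos (μ * t)‖ :=
    isBoundedUnder_of ⟨1, fun t => by simpa using abs_cos_le_one (μ * t)⟩
  have := ((isBoundedUnder_le_mul_tendsto_zero hsin hC).sub
    (isBoundedUnder_le_mul_tendsto_zero hcos hS)).const_mul μ⁻¹
  rw [sub_zero, mul_zero] at this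
  exact this

end VariationOfConstants

theorem stmt3 (μ : ℝ) (hμ : 0 < μ) (f : ℝ → ℝ) (hf : Continuous f)
    (I₁ I₂ : ℝ)
    (hI₁ : Tendsto (fun T => ∫ s in (0:ℝ)..T, Real.sin (μ * s) * f s) atTop (nhds I₁))
    (hI₂ : Tendsto (fun T => ∫ s in (0:ℝ)..T, Real.cos (μ * s) * f s) atTop (nhds I₂)) :
    ∃ y : ℝ → ℝ,
      ((∀ t ∈ Set.Ici (0:ℝ), HasDerivAt y (deriv y t) t ∧
          HasDerivAt (deriv y) (f t - μ ^ 2 * y t) t) ∧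
        Tendsto y atTop (nhds 0)) ∧
      ∀ z : ℝ → ℝ,
        ((∀ t ∈ Set.Ici (0:ℝ), HasDerivAt z (deriv z t) t ∧
            HasDerivAt (deriv z) (f t - μ ^ 2 * z t) t) ∧
          Tendsto z atTop (nhds 0)) →
        Set.EqOn z y (Set.Ici 0) := by
  set S := fun T => (∫ s in (0:ℝ)..T, sin (μ * s) * f s) - I₁
  set C := fun T => (∫ s in (0:ℝ)..T, cos (μ * s) * f s) - I₂
  have hS (t : ℝ) : HasDerivAt S (sin (μ * t) * f t) t :=
    ((Continuous.integral_hasStrictDerivAt (by fun_prop) 0 t).hasDerivAt).sub_const I₁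
  have hC (t : ℝ) : HasDerivAt C (cos (μ * t) * f t) t :=
    ((Continuous.integral_hasStrictDerivAt (by fun_prop) 0 t).hasDerivAt).sub_const I₂
  set y := variationOfConstants μ S C
  have hy (t : ℝ) : HasDerivAt y (deriv y t) t ∧ HasDerivAt (deriv y) (f t - μ ^ 2 * y t) t :=
    ⟨(hasDerivAt_variationOfConstants hμ.ne' (hS t) (hC t)).differentiableAt.hasDerivAt,
      hasDerivAt_deriv_variationOfConstants hμ.ne' hS hC t⟩
  have hy_lim : Tendsto y atTop (𝓝 0) :=
    tendsto_variationOfConstants (by simpa using hI₁.sub_const I₁) (by simpa using hI₂.sub_const I₂)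
  refine ⟨y, ⟨fun t _ => hy t, hy_lim⟩, fun z ⟨hz, hz_lim⟩ t ht => ?_⟩
  have hw := eqOn_zero_of_harmonic_of_tendsto_zero hμ.ne' (w := z - y) (w' := deriv z - deriv y)
    (fun t ht => (hz t ht).1.sub (hy t).1)
    (fun t ht => ((hz t ht).2.sub (hy t).2).congr_deriv (by simp only [Pi.sub_apply]; ring))
    (sub_self (0 : ℝ) ▸ hz_lim.sub hy_lim)
  exact sub_eq_zero.1 (hw ht)
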